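/- arXiv:2006.12772 — 3 statements merged into one kernel-verified Lean document; each statement's English description precedes it below -/
import Mathlib

section
/- Let K ≥ 1 be a real number, δ ∈ (0,1), Δ ∈ (0,1], and set t = (162/Δ²) · ln(162K/(δΔ²)). Then √( ln(4Kt³/δ) / (2t) ) < Δ/6. -/
/-!
Write `x = 162K/(δΔ²) ≥ 162`, so that `t = (162/Δ²) ln x` and `(Δ/6)² · 2t = 9 ln x`; the claim is
therefore `4Kt³/δ < x⁹`. Since `ln x < x` we have `t³ < (162/Δ²)³ x³`, and `4 (K/δ) (162/Δ²)³ < x⁶`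
holds with room to spare because `K/δ ≥ 1` and `1/Δ² ≥ 1`.
-/

open Real

section

variable {b c a : ℝ}

lemma one_lt_mul_mul_of_two_le (hb : 2 ≤ b) (hc : 1 ≤ c) (ha : 1 ≤ a) : 1 < b * c * a := by
  have : 2 ≤ b * c * a := by nlinarith [mul_le_mul hc ha zero_le_one (by linarith : (0 : ℝ) ≤ c)]
  linarith

lemma four_mul_mul_cube_lt_pow_nine (hb : 2 ≤ b) (hc : 1 ≤ c) (ha : 1 ≤ a) :
    4 * c * (b * a * log (b * c * a)) ^ 3 < (b * c * a) ^ 9 := by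
  set x := b * c * a with hx_def
  have hx : 1 < x := one_lt_mul_mul_of_two_le hb hc ha
  have hlog_pos : 0 < log x := log_pos hx
  have hlog_lt : log x < x := by linarith [log_le_sub_one_of_pos (by linarith : 0 < x)]
  have hcoeff : 4 * c * (b * a) ^ 3 < x ^ 6 := by
    have hpow : 8 ≤ b ^ 3 * c ^ 5 * a ^ 3 := by
      calc (8 : ℝ) = 2 ^ 3 * 1 * 1 := by norm_num
        _ ≤ b ^ 3 * c ^ 5 * a ^ 3 := by gcongr <;> exact one_le_pow₀ ‹_›
    have hba : 0 < c * (b * a) ^ 3 := by positivity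
    calc 4 * c * (b * a) ^ 3 < 8 * (c * (b * a) ^ 3) := by linarith
      _ ≤ b ^ 3 * c ^ 5 * a ^ 3 * (c * (b * a) ^ 3) := by gcongr
      _ = x ^ 6 := by rw [hx_def]; ring
  calc 4 * c * (b * a * log x) ^ 3 = 4 * c * (b * a) ^ 3 * log x ^ 3 := by ring
    _ < x ^ 6 * x ^ 3 :=
        mul_lt_mul'' hcoeff (pow_lt_pow_left₀ hlog_lt hlog_pos.le three_ne_zero)
          (by positivity) (by positivity)
    _ = x ^ 9 := by ring

end

/-- Let `K ≥ 1`, `δ ∈ (0,1)`, `Δ ∈ (0,1]`, and set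
`t = (162/Δ²) · ln(162K/(δΔ²))`. Then `√(ln(4Kt³/δ) / (2t)) < Δ/6`. -/
theorem confidence_radius_small (K δ Δ t : ℝ)
    (hK : 1 ≤ K) (hδ : δ ∈ Set.Ioo (0 : ℝ) 1) (hΔ : Δ ∈ Set.Ioc (0 : ℝ) 1)
    (ht : t = (162 / Δ ^ 2) * Real.log (162 * K / (δ * Δ ^ 2))) :
    Real.sqrt (Real.log (4 * K * t ^ 3 / δ) / (2 * t)) < Δ / 6 := by
  obtain ⟨hδ0, hδ1⟩ := hδ
  obtain ⟨hΔ0, hΔ1⟩ := hΔ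
  have hc : 1 ≤ K / δ := by rw [le_div_iff₀ hδ0]; linarith
  have ha : 1 ≤ (Δ ^ 2)⁻¹ := one_le_inv₀ (by positivity) |>.mpr (pow_le_one₀ hΔ0.le hΔ1)
  set x := 162 * (K / δ) * (Δ ^ 2)⁻¹ with hx_def
  have ht' : t = 162 * (Δ ^ 2)⁻¹ * log x := by
    rw [ht, show 162 * K / (δ * Δ ^ 2) = x by rw [hx_def]; field_simp]; ring
  have hx : 1 < x := one_lt_mul_mul_of_two_le (by norm_num) hc ha
  have htpos : 0 < t := by rw [ht']; have := log_pos hx; positivity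
  rw [sqrt_lt' (by positivity), div_lt_iff₀ (by positivity)]
  calc log (4 * K * t ^ 3 / δ) = log (4 * (K / δ) * t ^ 3) := by ring_nf
    _ < log (x ^ 9) := by
        refine log_lt_log (by positivity) ?_
        rw [ht']
        exact four_mul_mul_cube_lt_pow_nine (by norm_num) hc ha
    _ = (Δ / 6) ^ 2 * (2 * t) := by rw [log_pow, ht']; field_simp; ring
end

section
/- Let w, w̄, r : E → ℝ satisfy |w̄(e) − w(e)| ≤ r(e) for every e ∈ E. Fix a matching Out ∈ 𝓜 and define w̃(e) = w̄(e) − r(e) for e ∈ Out and w̃(e) = w̄(e) + r(e) for e ∉ Out. Then for every matching M ∈ 𝓜, w(M) − w(Out) ≤ w̃(M) − w̃(Out). In particular, if ε ≥ 0 and w̃(M) − w̃(Out) ≤ ℓε for every M ∈ 𝓜, then max_{M ∈ 𝓜} w(M) − w(Out) ≤ ℓε. -/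
/-!
Writing `d = w − w̃`, the confidence bounds `|w̄ − w| ≤ r` force `d ≥ 0` on the edges of `Out`
and `d ≤ 0` off them. Hence `Out` maximises `∑ d` over all edge sets, which is the first claim
rearranged; the second follows by taking the maximum over `M`.
-/

open Finset

/-- A matching: one edge for each of the `ℓ` positions, where edge `M j` is at
position `j` (according to the position map `s`). -/
def CPEDB.Matching (ℓ : ℕ) {E : Type*} (s : E → Fin ℓ) : Type _ :=
  { M : Fin ℓ → E // ∀ j, s (M j) = j }

/-- The set of edges of a matching. -/
def CPEDB.Matching.edges {ℓ : ℕ} {E : Type*} [Fintype E] [DecidableEq E]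
    {s : E → Fin ℓ} (M : CPEDB.Matching ℓ s) : Finset E :=
  Finset.image M.1 Finset.univ

namespace CPEDB

def pessimisticOn {E : Type*} [DecidableEq E] (T : Finset E) (wbar r : E → ℝ) (e : E) : ℝ :=
  if e ∈ T then wbar e - r e else wbar e + r e

theorem sum_le_sum_of_nonneg_on_of_nonpos_off {ι α : Type*} [DecidableEq ι]
    [AddCommMonoid α] [Preorder α] [AddLeftMono α] {f : ι → α} {S T : Finset ι}
    (h_on : ∀ i ∈ T, 0 ≤ f i) (h_off : ∀ i ∉ T, f i ≤ 0) :
    ∑ i ∈ S, f i ≤ ∑ i ∈ T, f i :=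
  calc ∑ i ∈ S, f i
      ≤ ∑ i ∈ S ∩ T, f i :=
        sum_le_sum_of_subset_of_nonpos' inter_subset_left
          fun i hiS hiST => h_off i fun hiT => hiST (mem_inter.mpr ⟨hiS, hiT⟩)
    _ ≤ ∑ i ∈ T, f i :=
        sum_le_sum_of_subset_of_nonneg inter_subset_right fun i hi _ => h_on i hi

theorem sum_sub_sum_le_sum_pessimisticOn_sub {E : Type*} [DecidableEq E] {w wbar r : E → ℝ}
    (hwr : ∀ e, |wbar e - w e| ≤ r e) (S T : Finset E) :
    (∑ e ∈ S, w e) - ∑ e ∈ T, w e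
      ≤ (∑ e ∈ S, pessimisticOn T wbar r e) - ∑ e ∈ T, pessimisticOn T wbar r e := by
  have h_on (e) (he : e ∈ T) : 0 ≤ w e - pessimisticOn T wbar r e := by
    rw [pessimisticOn, if_pos he]
    linarith [(abs_le.mp (hwr e)).2]
  have h_off (e) (he : e ∉ T) : w e - pessimisticOn T wbar r e ≤ 0 := by
    rw [pessimisticOn, if_neg he]
    linarith [(abs_le.mp (hwr e)).1]
  have h_diff := sum_le_sum_of_nonneg_on_of_nonpos_off (S := S) h_on h_off
  rw [sum_sub_distrib, sum_sub_distrib] at h_diff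
  linarith

end CPEDB

theorem pac_stopping_guarantee_general
    (ℓ : ℕ) (E : Type*) [Fintype E] [DecidableEq E]
    (s : E → Fin ℓ)
    (𝓜 : Finset (CPEDB.Matching ℓ s)) (h𝓜 : 𝓜.Nonempty)
    (w wbar r : E → ℝ) (hwr : ∀ e, |wbar e - w e| ≤ r e)
    (Out : CPEDB.Matching ℓ s)
    (wt : E → ℝ)
    (hwt : ∀ e, wt e = if e ∈ Out.edges then wbar e - r e else wbar e + r e) :
    (∀ M ∈ 𝓜, (∑ e ∈ M.edges, w e) - (∑ e ∈ Out.edges, w e)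
        ≤ (∑ e ∈ M.edges, wt e) - (∑ e ∈ Out.edges, wt e)) ∧
    (∀ ε : ℝ, 0 ≤ ε →
      (∀ M ∈ 𝓜, (∑ e ∈ M.edges, wt e) - (∑ e ∈ Out.edges, wt e) ≤ (ℓ : ℝ) * ε) →
      𝓜.sup' h𝓜 (fun M => ∑ e ∈ M.edges, w e) - (∑ e ∈ Out.edges, w e) ≤ (ℓ : ℝ) * ε) := by
  obtain rfl : wt = CPEDB.pessimisticOn Out.edges wbar r := funext hwt
  have gap_le (M : CPEDB.Matching ℓ s) :=
    CPEDB.sum_sub_sum_le_sum_pessimisticOn_sub hwr M.edges Out.edges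
  refine ⟨fun M _ => gap_le M, fun ε _ h_stop => ?_⟩
  rw [sub_le_iff_le_add]
  refine sup'_le h𝓜 _ fun M hM => ?_
  linarith [gap_le M, h_stop M hM]

/-- Let `w, w̄, r : E → ℝ` satisfy `|w̄(e) − w(e)| ≤ r(e)` for
every edge `e`.  Fix a matching `Out ∈ 𝓜` and define `w̃(e) = w̄(e) − r(e)` for
`e ∈ Out` and `w̃(e) = w̄(e) + r(e)` for `e ∉ Out`.  Then for every matching
`M ∈ 𝓜`, `w(M) − w(Out) ≤ w̃(M) − w̃(Out)`.  In particular, if `ε ≥ 0` and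
`w̃(M) − w̃(Out) ≤ ℓε` for every `M ∈ 𝓜`, then `max_{M ∈ 𝓜} w(M) − w(Out) ≤ ℓε`. -/
theorem pac_stopping_guarantee
    (ℓ : ℕ) (hℓ : 1 ≤ ℓ) (E : Type*) [Fintype E] [DecidableEq E]
    (s : E → Fin ℓ)
    (𝓜 : Finset (CPEDB.Matching ℓ s)) (h𝓜 : 𝓜.Nonempty)
    (w wbar r : E → ℝ) (hwr : ∀ e, |wbar e - w e| ≤ r e)
    (Out : CPEDB.Matching ℓ s) (hOut : Out ∈ 𝓜)
    (wt : E → ℝ)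
    (hwt : ∀ e, wt e = if e ∈ Out.edges then wbar e - r e else wbar e + r e) :
    (∀ M ∈ 𝓜, (∑ e ∈ M.edges, w e) - (∑ e ∈ Out.edges, w e)
        ≤ (∑ e ∈ M.edges, wt e) - (∑ e ∈ Out.edges, wt e)) ∧
    (∀ ε : ℝ, 0 ≤ ε →
      (∀ M ∈ 𝓜, (∑ e ∈ M.edges, wt e) - (∑ e ∈ Out.edges, wt e) ≤ (ℓ : ℝ) * ε) →
      𝓜.sup' h𝓜 (fun M => ∑ e ∈ M.edges, w e) - (∑ e ∈ Out.edges, w e) ≤ (ℓ : ℝ) * ε) :=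
  pac_stopping_guarantee_general ℓ E s 𝓜 h𝓜 w wbar r hwr Out wt hwt
end

section
/- Let w, w̄, r : E → ℝ satisfy |w̄(e) − w(e)| < r(e) for every e ∈ E. Fix a matching M_t ∈ 𝓜 and define w̃(e) = w̄(e) − r(e) for e ∈ M_t and w̃(e) = w̄(e) + r(e) for e ∉ M_t. If w̃(M_t) ≥ w̃(M) for every M ∈ 𝓜, then w(M_t) > w(M) for every M ∈ 𝓜 with M ≠ M_t; that is, M_t is the unique maximizer of w over 𝓜. -/
/-!
On the edges of `M_t` the perturbed weight `w̃` underestimates `w`, and off `M_t` it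
overestimates it. Comparing `M_t` with another matching `M`, only the edges of the symmetric
difference matter: `w(M_t) - w(M)` exceeds `w̃(M_t) - w̃(M) ≥ 0`, strictly because two distinct
matchings have the same number of edges, so `M_t \ M` is nonempty.
-/

open Finset

theorem Finset.sdiff_nonempty_of_card_eq_of_ne {α : Type*} [DecidableEq α] {s t : Finset α}
    (hcard : #s = #t) (hne : s ≠ t) : (s \ t).Nonempty :=
  sdiff_nonempty.2 fun hst => hne (eq_of_subset_of_card_le hst hcard.ge)

theorem Finset.sum_lt_sum_of_sdiff {ι β : Type*} [DecidableEq ι] [AddCommGroup β] [PartialOrder β]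
    [IsOrderedAddMonoid β] {s t : Finset ι} {f g : ι → β} (hst : (s \ t).Nonempty)
    (hlt : ∀ i ∈ s \ t, g i < f i) (hle : ∀ i ∈ t \ s, f i ≤ g i)
    (hg : ∑ i ∈ t, g i ≤ ∑ i ∈ s, g i) : ∑ i ∈ t, f i < ∑ i ∈ s, f i := by
  rw [← sub_pos]
  calc (0 : β)
      ≤ ∑ i ∈ s, g i - ∑ i ∈ t, g i := sub_nonneg.2 hg
    _ = ∑ i ∈ s \ t, g i - ∑ i ∈ t \ s, g i := (sum_sdiff_sub_sum_sdiff ..).symm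
    _ < ∑ i ∈ s \ t, f i - ∑ i ∈ t \ s, f i :=
        (sub_lt_sub_right (sum_lt_sum_of_nonempty hst hlt) _).trans_le
          (sub_le_sub_left (sum_le_sum hle) _)
    _ = ∑ i ∈ s, f i - ∑ i ∈ t, f i := sum_sdiff_sub_sum_sdiff ..

namespace CPEDB.Matching

variable {ℓ : ℕ} {E : Type*} {s : E → Fin ℓ}

theorem injective (M : Matching ℓ s) : Function.Injective M.1 := fun i j h => by
  rw [← M.2 i, h, M.2 j]

variable [Fintype E] [DecidableEq E]

theorem mem_edges {M : Matching ℓ s} {e : E} : e ∈ M.edges ↔ ∃ j, M.1 j = e := by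
  simp [edges]

theorem card_edges (M : Matching ℓ s) : #M.edges = ℓ := by
  rw [edges, card_image_of_injective _ M.injective, card_univ, Fintype.card_fin]

theorem edges_injective : Function.Injective (edges : Matching ℓ s → Finset E) := by
  intro M N h
  refine Subtype.ext (funext fun j => ?_)
  obtain ⟨i, hi⟩ := mem_edges.1 (h ▸ mem_edges.2 ⟨j, rfl⟩ : M.1 j ∈ N.edges)
  have hij : i = j := by rw [← N.2 i, hi, M.2 j]
  rw [← hi, hij]

theorem sdiff_edges_nonempty {M N : Matching ℓ s} (h : M ≠ N) : (M.edges \ N.edges).Nonempty :=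
  sdiff_nonempty_of_card_eq_of_ne (by rw [card_edges, card_edges]) (edges_injective.ne h)

end CPEDB.Matching

theorem exact_stopping_guarantee_general
    (ℓ : ℕ) (E : Type*) [Fintype E] [DecidableEq E]
    (s : E → Fin ℓ)
    (𝓜 : Finset (CPEDB.Matching ℓ s))
    (w wbar r : E → ℝ) (hwr : ∀ e, |wbar e - w e| < r e)
    (Mt : CPEDB.Matching ℓ s)
    (wt : E → ℝ)
    (hwt : ∀ e, wt e = if e ∈ Mt.edges then wbar e - r e else wbar e + r e)
    (hmax : ∀ M ∈ 𝓜, ∑ e ∈ M.edges, wt e ≤ ∑ e ∈ Mt.edges, wt e) :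
    ∀ M ∈ 𝓜, M ≠ Mt → ∑ e ∈ M.edges, w e < ∑ e ∈ Mt.edges, w e := by
  intro M hM hne
  have hbelow : ∀ e ∈ Mt.edges \ M.edges, wt e < w e := by
    intro e he
    rw [hwt, if_pos (mem_sdiff.1 he).1]
    linarith [(abs_lt.1 (hwr e)).2]
  have habove : ∀ e ∈ M.edges \ Mt.edges, w e ≤ wt e := by
    intro e he
    rw [hwt, if_neg (mem_sdiff.1 he).2]
    linarith [(abs_lt.1 (hwr e)).1]
  exact sum_lt_sum_of_sdiff (CPEDB.Matching.sdiff_edges_nonempty hne.symm) hbelow habove (hmax M hM)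

/-- Let `w, w̄, r : E → ℝ` satisfy `|w̄(e) − w(e)| < r(e)` for
every edge `e`.  Fix a matching `M_t ∈ 𝓜` and define `w̃(e) = w̄(e) − r(e)` for
`e ∈ M_t` and `w̃(e) = w̄(e) + r(e)` for `e ∉ M_t`.  If `w̃(M_t) ≥ w̃(M)` for every
`M ∈ 𝓜`, then `w(M_t) > w(M)` for every `M ∈ 𝓜` with `M ≠ M_t`; that is, `M_t` is
the unique maximizer of `w` over `𝓜`. -/
theorem exact_stopping_guarantee
    (ℓ : ℕ) (hℓ : 1 ≤ ℓ) (E : Type*) [Fintype E] [DecidableEq E]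
    (s : E → Fin ℓ)
    (𝓜 : Finset (CPEDB.Matching ℓ s)) (h𝓜 : 𝓜.Nonempty)
    (w wbar r : E → ℝ) (hwr : ∀ e, |wbar e - w e| < r e)
    (Mt : CPEDB.Matching ℓ s) (hMt : Mt ∈ 𝓜)
    (wt : E → ℝ)
    (hwt : ∀ e, wt e = if e ∈ Mt.edges then wbar e - r e else wbar e + r e)
    (hmax : ∀ M ∈ 𝓜, ∑ e ∈ M.edges, wt e ≤ ∑ e ∈ Mt.edges, wt e) :
    ∀ M ∈ 𝓜, M ≠ Mt → ∑ e ∈ M.edges, w e < ∑ e ∈ Mt.edges, w e :=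
  exact_stopping_guarantee_general ℓ E s 𝓜 w wbar r hwr Mt wt hwt hmax
end
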